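/- In the radius lower-bound graph G_{x,y}, every node u that does not belong to A has eccentricity e(u) ≥ 4. -/

import Mathlib

/-- Vertices of the radius lower-bound graph `G_{x,y}`: the bit-gadget vertices
`a i`, `b i`, `fA h`, `tA h`, `fB h`, `tB h`, together with the seven extra nodes
`cA`, `cA'` (= c̄_A), `cB`, `cB'` (= c̄_B), `w0`, `w1`, `w2`. -/
inductive RVertex (k logk : ℕ) where
  | a (i : Fin k)
  | b (i : Fin k)
  | fA (h : Fin logk)
  | tA (h : Fin logk)
  | fB (h : Fin logk)
  | tB (h : Fin logk)
  | cA
  | cA'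
  | cB
  | cB'
  | w0
  | w1
  | w2
deriving DecidableEq

/-- Base relation generating the edges of the radius lower-bound graph `G_{x,y}`. -/
def rRel (k logk : ℕ) (x y : Fin k → Bool) : RVertex k logk → RVertex k logk → Prop
  | .a i, .fA h => i.val.testBit h.val = false
  | .a i, .tA h => i.val.testBit h.val = true
  | .b i, .fB h => i.val.testBit h.val = false
  | .b i, .tB h => i.val.testBit h.val = true
  | .fA h, .tB h' => h = h'
  | .tA h, .fB h' => h = h'
  | .fA h, .tA h' => h = h'
  | .a _, .cA => True
  | .b _, .cB => True
  | .fA _, .cA' => True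
  | .tA _, .cA' => True
  | .fB _, .cB' => True
  | .tB _, .cB' => True
  | .cA, .cA' => True
  | .cB, .cB' => True
  | .cA', .cB' => True
  | .w0, .w1 => True
  | .w1, .w2 => True
  | .w0, .a _ => True
  | .a i, .cA' => x i = true
  | .b i, .cB' => y i = true
  | _, _ => False

/-- The radius lower-bound graph `G_{x,y}`. -/
def rGraph (k logk : ℕ) (x y : Fin k → Bool) : SimpleGraph (RVertex k logk) :=
  SimpleGraph.fromRel (rRel k logk x y)

/-- The eccentricity of a node: the supremum of its hop distances to all nodes. -/
noncomputable def eccent {V : Type*} (G : SimpleGraph V) (u : V) : ℕ∞ :=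
  ⨆ v, G.edist u v

/-- The radius of a graph: the minimum eccentricity of a node. -/
noncomputable def radius {V : Type*} (G : SimpleGraph V) : ℕ∞ :=
  ⨅ u, eccent G u

/-!
A function `f` on the nodes that changes by at most `1` along every edge bounds distances from
below: `|f u - f v| ≤ dist(u, v)`. Only `w¹`, `w⁰` and the nodes of `A` are within distance `3`
of `w²`, so the truncated distance `min (dist(·, w²)) 4` separates every node outside
`A ∪ {w⁰, w¹}` by `4` from `w²` or `c_B`. For `w⁰` and `w¹` the truncated distance to
`B ∪ {c_B}` does the same, since any path from `A` to `B` needs three edges.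
-/

namespace SimpleGraph

variable {V : Type*} {G : SimpleGraph V} {f : V → ℕ}

lemma Walk.apply_le_apply_add_length (hf : ∀ u v, G.Adj u v → f v ≤ f u + 1) {u v : V}
    (w : G.Walk u v) : f v ≤ f u + w.length := by
  induction w with
  | nil => simp
  | cons h _ ih =>
    have := hf _ _ h
    rw [Walk.length_cons]
    omega

lemma apply_le_apply_add_edist (hf : ∀ u v, G.Adj u v → f v ≤ f u + 1) (u v : V) :
    (f v : ℕ∞) ≤ f u + G.edist u v := by
  by_cases h : G.Reachable u v
  · obtain ⟨w, hw⟩ := h.exists_walk_length_eq_edist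
    rw [← hw]
    exact_mod_cast w.apply_le_apply_add_length hf
  · simp [edist_eq_top_of_not_reachable h]

lemma natDist_le_edist (hf : ∀ u v, G.Adj u v → f v ≤ f u + 1) (u v : V) :
    (Nat.dist (f u) (f v) : ℕ∞) ≤ G.edist u v := by
  rcases le_total (f u) (f v) with huv | hvu
  · rw [Nat.dist_eq_sub_of_le huv, ENat.natCast_sub]
    exact tsub_le_iff_left.2 (apply_le_apply_add_edist hf u v)
  · rw [Nat.dist_comm, Nat.dist_eq_sub_of_le hvu, ENat.natCast_sub, edist_comm]
    exact tsub_le_iff_left.2 (apply_le_apply_add_edist hf v u)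

end SimpleGraph

lemma natDist_le_eccent {V : Type*} {G : SimpleGraph V} {f : V → ℕ}
    (hf : ∀ u v, G.Adj u v → f v ≤ f u + 1) (u v : V) :
    (Nat.dist (f u) (f v) : ℕ∞) ≤ eccent G u :=
  (SimpleGraph.natDist_le_edist hf u v).trans (le_iSup (G.edist u) v)

namespace RVertex

variable {k logk : ℕ}

/-- `min (dist(·, w²)) 4`. -/
def truncDistW2 : RVertex k logk → ℕ
  | .w2 => 0 | .w1 => 1 | .w0 => 2 | .a _ => 3 | _ => 4

/-- `min (dist(·, B ∪ {c_B})) 4`. -/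
def truncDistB : RVertex k logk → ℕ
  | .b _ | .cB => 0
  | .fB _ | .tB _ | .cB' => 1
  | .fA _ | .tA _ | .cA | .cA' => 2
  | .a _ => 3
  | .w0 | .w1 | .w2 => 4

end RVertex

section
open RVertex

variable {k logk : ℕ} (x y : Fin k → Bool)

lemma rGraph_truncDistW2_le_succ (u v : RVertex k logk) (h : (rGraph k logk x y).Adj u v) :
    truncDistW2 v ≤ truncDistW2 u + 1 := by
  rw [rGraph, SimpleGraph.fromRel_adj] at h
  rcases h with ⟨-, h | h⟩ <;> cases u <;> cases v <;> simp_all [rRel, truncDistW2]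

lemma rGraph_truncDistB_le_succ (u v : RVertex k logk) (h : (rGraph k logk x y).Adj u v) :
    truncDistB v ≤ truncDistB u + 1 := by
  rw [rGraph, SimpleGraph.fromRel_adj] at h
  rcases h with ⟨-, h | h⟩ <;> cases u <;> cases v <;> simp_all [rRel, truncDistB]

end

theorem rGraph_eccent_ge_four_general (k logk : ℕ)
    (x y : Fin k → Bool) (u : RVertex k logk) (hu : ∀ i : Fin k, u ≠ RVertex.a i) :
    4 ≤ eccent (rGraph k logk x y) u := by
  have dist_w2 := natDist_le_eccent (rGraph_truncDistW2_le_succ (logk := logk) x y)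
  have dist_B := natDist_le_eccent (rGraph_truncDistB_le_succ (logk := logk) x y)
  cases u with
  | a i => exact absurd rfl (hu i)
  | w0 => exact dist_B .w0 .cB
  | w1 => exact dist_B .w1 .cB
  | w2 => exact dist_w2 .w2 .cB
  | _ => exact dist_w2 _ .w2

/-- in the radius lower-bound graph `G_{x,y}`, every node `u` not
belonging to `A` has eccentricity at least `4`. -/
theorem rGraph_eccent_ge_four (k logk : ℕ) (hk : 2 ≤ k) (hpow : k = 2 ^ logk)
    (x y : Fin k → Bool) (u : RVertex k logk) (hu : ∀ i : Fin k, u ≠ RVertex.a i) :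
    4 ≤ eccent (rGraph k logk x y) u :=
  rGraph_eccent_ge_four_general k logk x y u hu
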